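/- The initial marking {i} + Σ_{j=1..n} {i_j} of the synchronization pattern net with n clients satisfies the five invariants: (1) m(i) + m(p) + m(q) + m(r) = 1; (2) for all j ∈ {1,…,n}: m(i_j) + m(p_j) + m(q_j) + m(r_j) = 1; (3) Σ_{j=1..n} m(p_j) = m(a_1) + m(p) + m(a_2); (4) (Σ_{k=1..n} m(q_k)) + m(a_2) ≤ 1; (5) m(a_2) + m(a_3) ≤ 1 and m(a_2) + m(a_3) = m(q) − Σ_{k=1..n} m(q_k). Consequently, by induction using preservation of these invariants under firing, every marking reachable from the initial marking satisfies all five invariants. -/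

import Mathlib

namespace PortNets

/-- Direction of communication of a transition: send, receive, or internal (τ). -/
inductive Dir : Type
  | send | receive | tau
deriving DecidableEq

/-- Preset of a node `x` with respect to a flow relation `F`. -/
def pre {Node : Type} (F : Set (Node × Node)) (x : Node) : Set Node := {y | (y, x) ∈ F}

/-- Postset of a node `x` with respect to a flow relation `F`. -/
def post {Node : Type} (F : Set (Node × Node)) (x : Node) : Set Node := {y | (x, y) ∈ F}

/-- Raw data of an open Petri net (with labels): internal places `P`, input places `I`,
output places `O`, transitions `T`, flow `F`, initial and final places, labeling `μ`. -/
structure OPN (Node L : Type) where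
  P : Set Node
  I : Set Node
  O : Set Node
  T : Set Node
  F : Set (Node × Node)
  init : Set Node
  fin : Set Node
  μ : Node → L

variable {Node L : Type}

/-- All places of an OPN. -/
def OPN.places (N : OPN Node L) : Set Node := N.P ∪ N.I ∪ N.O

/-- All nodes of an OPN. -/
def OPN.nodes (N : OPN Node L) : Set Node := N.places ∪ N.T

/-- Structural requirements of an open Petri net. -/
structure IsOPN (N : OPN Node L) : Prop where
  disjPI : N.P ∩ N.I = ∅
  disjPO : N.P ∩ N.O = ∅
  disjIO : N.I ∩ N.O = ∅
  disjPT : N.places ∩ N.T = ∅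
  flow_sub : N.F ⊆ (N.places ×ˢ N.T) ∪ (N.T ×ˢ N.places)
  no_pre_I : ∀ x ∈ N.I, pre N.F x = ∅
  no_post_O : ∀ x ∈ N.O, post N.F x = ∅
  not_both : ∀ t ∈ N.T, ¬((pre N.F t ∩ N.I).Nonempty ∧ (post N.F t ∩ N.O).Nonempty)
  init_sub : N.init ⊆ N.P
  fin_sub : N.fin ⊆ N.P

open Classical in
noncomputable def dir (N : OPN Node L) (t : Node) : Dir :=
  if (post N.F t ∩ N.O).Nonempty then Dir.send
  else if (pre N.F t ∩ N.I).Nonempty then Dir.receive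
  else Dir.tau

open Classical in
noncomputable def fireAt (F : Set (Node × Node)) (m : Node → ℕ) (t : Node) : Node → ℕ :=
  fun p => m p - (if (p, t) ∈ F then 1 else 0) + (if (t, p) ∈ F then 1 else 0)

/-- `Fires T F m t m'`: transition `t` is enabled in marking `m` and firing it yields `m'`. -/
def Fires (T : Set Node) (F : Set (Node × Node)) (m : Node → ℕ) (t : Node)
    (m' : Node → ℕ) : Prop :=
  t ∈ T ∧ (∀ p, (p, t) ∈ F → 1 ≤ m p) ∧ m' = fireAt F m t

/-- Firing a finite sequence of transitions. -/
inductive FireSeq (T : Set Node) (F : Set (Node × Node)) :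
    (Node → ℕ) → List Node → (Node → ℕ) → Prop
  | nil (m : Node → ℕ) : FireSeq T F m [] m
  | cons {m m' m'' : Node → ℕ} {t : Node} {σ : List Node} :
      Fires T F m t m' → FireSeq T F m' σ m'' → FireSeq T F m (t :: σ) m''

/-- Reachability of markings. -/
def Reach (T : Set Node) (F : Set (Node × Node)) (m m' : Node → ℕ) : Prop :=
  ∃ σ : List Node, FireSeq T F m σ m'

/-- Weak termination: from every marking reachable from `m0`, the marking `mf` is reachable. -/
def WeaklyTerminates (T : Set Node) (F : Set (Node × Node)) (m0 mf : Node → ℕ) : Prop :=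
  ∀ m, Reach T F m0 m → Reach T F m mf

/-- The marking putting one token on each element of a set of places. -/
noncomputable def mark (s : Set Node) : Node → ℕ := s.indicator fun _ => 1

/-- Flow relation of the skeleton: all arcs not adjacent to interface places. -/
def skF (N : OPN Node L) : Set (Node × Node) :=
  {x ∈ N.F | x.1 ∉ N.I ∪ N.O ∧ x.2 ∉ N.I ∪ N.O}

/-- The skeleton is a state machine: each transition has at most one place in its
preset and at most one in its postset. -/
def IsSM (N : OPN Node L) : Prop :=
  ∀ t ∈ N.T, (pre (skF N) t).Subsingleton ∧ (post (skF N) t).Subsingleton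

/-- `x` lies on a path from `i` to `f` w.r.t. flow `F`. -/
def OnPath (F : Set (Node × Node)) (i f x : Node) : Prop :=
  ∃ l : List Node, l ≠ [] ∧ List.Chain' (fun a b => (a, b) ∈ F) l ∧
    l.head? = some i ∧ l.getLast? = some f ∧ x ∈ l

/-- Workflow net (with places `P`, transitions `T`, flow `F`): `i` is the unique place with
empty preset, `f` the unique place with empty postset, and every node is on a path
from `i` to `f`. -/
def IsWFNOn (P T : Set Node) (F : Set (Node × Node)) (i f : Node) : Prop :=
  i ∈ P ∧ f ∈ P ∧ pre F i = ∅ ∧ post F f = ∅ ∧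
    (∀ p ∈ P, pre F p = ∅ → p = i) ∧
    (∀ p ∈ P, post F p = ∅ → p = f) ∧
    (∀ x ∈ P ∪ T, OnPath F i f x)

/-- Transition `t` is connected (by an arc, in either direction) to node `x`. -/
def connected (N : OPN Node L) (t x : Node) : Prop := (x, t) ∈ N.F ∨ (t, x) ∈ N.F

/-- A labeled portnet: an OPN whose skeleton is a state-machine workflow net, with
singleton `init` and `fin`, every transition connected to exactly one interface place,
transitions sharing an interface place sharing a label, and transitions sharing a
label sharing their interface place connections. -/
structure IsPortnet (N : OPN Node L) : Prop where
  isOPN : IsOPN N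
  isSM : IsSM N
  init_single : ∃ i, N.init = {i}
  fin_single : ∃ f, N.fin = {f}
  isWFN : ∀ i f, N.init = {i} → N.fin = {f} → IsWFNOn N.P N.T (skF N) i f
  one_iface : ∀ t ∈ N.T, ∃! x, x ∈ N.I ∪ N.O ∧ connected N t x
  same_iface_label : ∀ x ∈ N.I ∪ N.O, ∀ t t', t ∈ N.T → t' ∈ N.T →
    connected N t x → connected N t' x → N.μ t = N.μ t'
  same_label_iface : ∀ t ∈ N.T, ∀ t' ∈ N.T, N.μ t = N.μ t' →
    ∀ x ∈ N.I ∪ N.O, (connected N t x ↔ connected N t' x)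

/-- Observable choices: distinct transitions in the postset of a place have distinct labels. -/
def ObservableChoices (N : OPN Node L) : Prop :=
  ∀ p ∈ N.P, ∀ t ∈ post N.F p, ∀ t' ∈ post N.F p, t ≠ t' → N.μ t ≠ N.μ t'

/-- Choice property: all transitions in the postset of a place have the same direction. -/
def ChoiceProp (N : OPN Node L) : Prop :=
  ∀ p ∈ N.P, ∀ t ∈ post N.F p, ∀ t' ∈ post N.F p, dir N t = dir N t'

/-- Diamond property. -/
def DiamondProp (N : OPN Node L) : Prop :=
  ∀ p ∈ N.P, ∀ t ∈ post N.F p, ∀ t' ∈ post N.F p, dir N t ≠ dir N t' →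
    ∀ q ∈ post (skF N) t, ∀ q' ∈ post (skF N) t',
      ∃ u ∈ post (skF N) q, ∃ u' ∈ post (skF N) q',
        (post (skF N) u ∩ post (skF N) u').Nonempty ∧
        N.μ t = N.μ u' ∧ N.μ t' = N.μ u

/-- Loop property. -/
def LoopProp (N : OPN Node L) : Prop :=
  ∀ p ∈ N.P, ∀ t ∈ post N.F p, ∀ t' ∈ post N.F p, t ≠ t' → dir N t = dir N t' →
    ∀ (l : List Node) (t'' : Node),
      List.Chain' (fun a b => (a, b) ∈ N.F) (p :: t :: (l ++ [t''])) →
      t'' ∈ N.T → N.μ t'' = N.μ t' →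
      (∀ u ∈ l, u ∈ N.T → N.μ u ≠ N.μ t') →
      ∃ v ∈ t :: (l ++ [t'']), v ∈ N.T ∧ dir N v ≠ dir N t

/-- Well-formed labeled portnet. -/
def WellFormed (N : OPN Node L) : Prop :=
  IsPortnet N ∧ ObservableChoices N ∧ DiamondProp N ∧ LoopProp N

/-- `(M, φ)` is a partial mirror of the labeled portnet `N`. -/
structure IsPartialMirror (N M : OPN Node L) (φ : Node → Node) : Prop where
  portN : IsPortnet N
  portM : IsPortnet M
  inj : Set.InjOn φ M.nodes
  mapsP : ∀ x ∈ M.P, φ x ∈ N.P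
  mapsT : ∀ x ∈ M.T, φ x ∈ N.T
  mapsI : ∀ x ∈ M.I, φ x ∈ N.O
  mapsO : ∀ x ∈ M.O, φ x ∈ N.I
  flow_same : ∀ x y, (x, y) ∈ M.F → x ∉ M.I → y ∉ M.O → (φ x, φ y) ∈ N.F
  flow_rev : ∀ x y, (x, y) ∈ M.F → (x ∈ M.I ∨ y ∈ M.O) → (φ y, φ x) ∈ N.F
  init_eq : φ '' M.init = N.init
  fin_eq : φ '' M.fin = N.fin
  lab : ∀ t ∈ M.T, M.μ t = N.μ (φ t)
  send_cover : ∀ p ∈ M.P, ∀ t, (φ p, t) ∈ N.F → dir N t = Dir.send →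
    ∃ t', (p, t') ∈ M.F ∧ φ t' = t

/-- Composability of two OPNs. -/
def Composable (N M : OPN Node L) : Prop :=
  (N.nodes ∩ M.nodes = (N.I ∪ N.O) ∩ (M.I ∪ M.O)) ∧
  (((N.I ∩ M.O) ∪ (M.I ∩ N.O)).Nonempty →
    N.O ⊆ M.I ∧ M.O ⊆ N.I ∧ N.I ∩ M.I = ∅ ∧ N.O ∩ M.O = ∅)

open Classical in
noncomputable def compose2 (N M : OPN Node L) : OPN Node L where
  P := N.P ∪ M.P ∪ ((N.I ∪ M.I) ∩ (N.O ∪ M.O))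
  I := (N.I ∪ M.I) \ (N.O ∪ M.O)
  O := (N.O ∪ M.O) \ (N.I ∪ M.I)
  T := N.T ∪ M.T
  F := N.F ∪ M.F
  init := N.init ∪ M.init
  fin := N.fin ∪ M.fin
  μ := fun x => if x ∈ N.T then N.μ x else M.μ x

end PortNets

namespace PortNets

/-- Nodes of the synchronization pattern net with `n` clients: server places
`pi, pp, pq, pr`, interface places `pa1, pa2, pa3`, client places `pic j, ppc j, pqc j,
prc j`, server transitions `tu, tv, tw, tt`, and client transitions `tuc j, tvc j, twc j`. -/
inductive SPNode (n : ℕ) : Type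
  | pi | pp | pq | pr
  | pa1 | pa2 | pa3
  | pic (j : Fin n) | ppc (j : Fin n) | pqc (j : Fin n) | prc (j : Fin n)
  | tu | tv | tw | tt
  | tuc (j : Fin n) | tvc (j : Fin n) | twc (j : Fin n)
deriving DecidableEq

/-- Transitions of the synchronization pattern net. -/
def spT (n : ℕ) : Set (SPNode n) :=
  {x | x = SPNode.tu ∨ x = SPNode.tv ∨ x = SPNode.tw ∨ x = SPNode.tt ∨
       ∃ j, x = SPNode.tuc j ∨ x = SPNode.tvc j ∨ x = SPNode.twc j}

/-- Flow relation of the synchronization pattern net: `•u = {i, a1}`, `u• = {p}`;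
`•v = {p}`, `v• = {q, a2}`; `•w = {q, a3}`, `w• = {r}`; `•t = {r}`, `t• = {i}`;
`•u_j = {i_j}`, `u_j• = {p_j, a1}`; `•v_j = {p_j, a2}`, `v_j• = {q_j}`;
`•w_j = {q_j}`, `w_j• = {r_j, a3}`. -/
def spF (n : ℕ) : Set (SPNode n × SPNode n) :=
  {x | x = (SPNode.pi, SPNode.tu) ∨ x = (SPNode.pa1, SPNode.tu) ∨
       x = (SPNode.tu, SPNode.pp) ∨
       x = (SPNode.pp, SPNode.tv) ∨ x = (SPNode.tv, SPNode.pq) ∨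
       x = (SPNode.tv, SPNode.pa2) ∨
       x = (SPNode.pq, SPNode.tw) ∨ x = (SPNode.pa3, SPNode.tw) ∨
       x = (SPNode.tw, SPNode.pr) ∨
       x = (SPNode.pr, SPNode.tt) ∨ x = (SPNode.tt, SPNode.pi) ∨
       ∃ j, x = (SPNode.pic j, SPNode.tuc j) ∨ x = (SPNode.tuc j, SPNode.ppc j) ∨
            x = (SPNode.tuc j, SPNode.pa1) ∨
            x = (SPNode.ppc j, SPNode.tvc j) ∨ x = (SPNode.pa2, SPNode.tvc j) ∨
            x = (SPNode.tvc j, SPNode.pqc j) ∨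
            x = (SPNode.pqc j, SPNode.twc j) ∨ x = (SPNode.twc j, SPNode.prc j) ∨
            x = (SPNode.twc j, SPNode.pa3)}

/-- Initial marking `{i} + Σ_j {i_j}` of the synchronization pattern net. -/
noncomputable def spM0 (n : ℕ) : SPNode n → ℕ :=
  mark ({SPNode.pi} ∪ Set.range SPNode.pic)

/-- Final marking `{i} + Σ_j {r_j}` of the synchronization pattern net. -/
noncomputable def spMf (n : ℕ) : SPNode n → ℕ :=
  mark ({SPNode.pi} ∪ Set.range SPNode.prc)

/-- The five place invariants of the synchronization pattern (Lemma on place invariants);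
the fifth equation is over the integers. -/
def SPInv (n : ℕ) (m : SPNode n → ℕ) : Prop :=
  (m SPNode.pi + m SPNode.pp + m SPNode.pq + m SPNode.pr = 1) ∧
  (∀ j : Fin n, m (SPNode.pic j) + m (SPNode.ppc j) + m (SPNode.pqc j) + m (SPNode.prc j) = 1) ∧
  (∑ j : Fin n, m (SPNode.ppc j) = m SPNode.pa1 + m SPNode.pp + m SPNode.pa2) ∧
  ((∑ j : Fin n, m (SPNode.pqc j)) + m SPNode.pa2 ≤ 1) ∧
  (m SPNode.pa2 + m SPNode.pa3 ≤ 1 ∧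
    (m SPNode.pa2 : ℤ) + (m SPNode.pa3 : ℤ) =
      (m SPNode.pq : ℤ) - ∑ j : Fin n, (m (SPNode.pqc j) : ℤ))

end PortNets


/-!
Invariants (1), (2), (3) and the equation in (5) are linear place invariants: weighted token
counts whose weight vector is annihilated by every column of the incidence matrix, so they are
constant along firing sequences and can be read off the initial marking. The inequalities need
no separate induction: the equation in (5) gives `a₂ + a₃ + Σ q_k = q`, and `q ≤ 1` by (1).
-/

namespace PortNets

section PlaceInvariant

variable {Node : Type} {T : Set Node} {F : Set (Node × Node)}

open Classical in
noncomputable def incidence (F : Set (Node × Node)) (t : Node) : Node → ℤ :=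
  fun p => (if (t, p) ∈ F then 1 else 0) - (if (p, t) ∈ F then 1 else 0)

lemma Fires.cast_eq_add_incidence {m m' : Node → ℕ} {t : Node} (h : Fires T F m t m') :
    (fun p => (m' p : ℤ)) = (fun p => (m p : ℤ)) + incidence F t := by
  obtain ⟨-, hen, rfl⟩ := h
  funext p
  -- enabledness rules out the truncated subtraction in `fireAt`
  have := hen p
  simp only [fireAt, incidence, Pi.add_apply]
  split_ifs <;> grind

def tokens (p : Node) : (Node → ℤ) →ₗ[ℤ] ℤ := LinearMap.proj p

@[simp] lemma tokens_apply (p : Node) (m : Node → ℤ) : tokens p m = m p := rfl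

def IsPlaceInvariant (T : Set Node) (F : Set (Node × Node)) (φ : (Node → ℤ) →ₗ[ℤ] ℤ) : Prop :=
  ∀ t ∈ T, φ (incidence F t) = 0

namespace IsPlaceInvariant

variable {φ : (Node → ℤ) →ₗ[ℤ] ℤ} {m m' : Node → ℕ}

lemma map_fires (hφ : IsPlaceInvariant T F φ) {t : Node} (h : Fires T F m t m') :
    φ (fun p => (m' p : ℤ)) = φ (fun p => (m p : ℤ)) := by
  rw [h.cast_eq_add_incidence, map_add, hφ t h.1, add_zero]

lemma map_fireSeq (hφ : IsPlaceInvariant T F φ) {σ : List Node} (h : FireSeq T F m σ m') :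
    φ (fun p => (m' p : ℤ)) = φ (fun p => (m p : ℤ)) := by
  induction h with
  | nil => rfl
  | cons hf _ ih => rw [ih, hφ.map_fires hf]

lemma map_reach (hφ : IsPlaceInvariant T F φ) (h : Reach T F m m') :
    φ (fun p => (m' p : ℤ)) = φ (fun p => (m p : ℤ)) :=
  h.elim fun _ hσ => hφ.map_fireSeq hσ

end IsPlaceInvariant

end PlaceInvariant

section SynchronizationPattern

open SPNode

variable {n : ℕ}

def spServerInv (n : ℕ) : (SPNode n → ℤ) →ₗ[ℤ] ℤ :=
  tokens SPNode.pi + tokens pp + tokens pq + tokens pr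

def spClientInv (j : Fin n) : (SPNode n → ℤ) →ₗ[ℤ] ℤ :=
  tokens (pic j) + tokens (ppc j) + tokens (pqc j) + tokens (prc j)

def spPInv (n : ℕ) : (SPNode n → ℤ) →ₗ[ℤ] ℤ :=
  ∑ j, tokens (ppc j) - tokens pa1 - tokens pp - tokens pa2

def spQInv (n : ℕ) : (SPNode n → ℤ) →ₗ[ℤ] ℤ :=
  tokens pa2 + tokens pa3 - tokens pq + ∑ j, tokens (pqc j)

lemma spServerInv_isPlaceInvariant : IsPlaceInvariant (spT n) (spF n) (spServerInv n) := by
  rintro t (rfl | rfl | rfl | rfl | ⟨k, rfl | rfl | rfl⟩) <;>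
    simp [spServerInv, incidence, spF]

lemma spClientInv_isPlaceInvariant (j : Fin n) :
    IsPlaceInvariant (spT n) (spF n) (spClientInv j) := by
  rintro t (rfl | rfl | rfl | rfl | ⟨k, rfl | rfl | rfl⟩) <;>
    simp [spClientInv, incidence, spF, eq_comm (b := j)]

lemma spPInv_isPlaceInvariant : IsPlaceInvariant (spT n) (spF n) (spPInv n) := by
  rintro t (rfl | rfl | rfl | rfl | ⟨k, rfl | rfl | rfl⟩) <;>
    simp [spPInv, incidence, spF]

lemma spQInv_isPlaceInvariant : IsPlaceInvariant (spT n) (spF n) (spQInv n) := by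
  rintro t (rfl | rfl | rfl | rfl | ⟨k, rfl | rfl | rfl⟩) <;>
    simp [spQInv, incidence, spF]

lemma spInv_of_placeInvariants {m : SPNode n → ℕ}
    (hServer : spServerInv n (fun p => (m p : ℤ)) = 1)
    (hClient : ∀ j, spClientInv j (fun p => (m p : ℤ)) = 1)
    (hP : spPInv n (fun p => (m p : ℤ)) = 0)
    (hQ : spQInv n (fun p => (m p : ℤ)) = 0) : SPInv n m := by
  simp only [spServerInv, spClientInv, spPInv, spQInv, LinearMap.add_apply,
    LinearMap.sub_apply, LinearMap.sum_apply, tokens_apply] at *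
  rw [← Nat.cast_sum] at hP hQ
  refine ⟨by omega, fun j => by have := hClient j; omega, by omega, by omega, by omega, ?_⟩
  rw [← Nat.cast_sum]
  omega

lemma spInv_of_reach {m : SPNode n → ℕ} (h : Reach (spT n) (spF n) (spM0 n) m) :
    SPInv n m := by
  apply spInv_of_placeInvariants
  · rw [spServerInv_isPlaceInvariant.map_reach h]
    simp [spServerInv, spM0, mark]
  · intro j
    rw [(spClientInv_isPlaceInvariant j).map_reach h]
    simp [spClientInv, spM0, mark]
  · rw [spPInv_isPlaceInvariant.map_reach h]
    simp [spPInv, spM0, mark]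
  · rw [spQInv_isPlaceInvariant.map_reach h]
    simp [spQInv, spM0, mark]

end SynchronizationPattern

/-- the initial marking of the synchronization pattern net satisfies the
five place invariants; consequently (by induction, using preservation under firing),
every marking reachable from the initial marking satisfies all five invariants. -/
theorem sp_initial_invariants (n : ℕ) :
    SPInv n (spM0 n) ∧ ∀ m : SPNode n → ℕ, Reach (spT n) (spF n) (spM0 n) m → SPInv n m :=
  ⟨spInv_of_reach ⟨[], .nil _⟩, fun _ => spInv_of_reach⟩

end PortNets
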